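/- If f ∈ B_n^σ(β), then for |z| = r < 1: r + 2(1−β) Σ_{k=2}^∞ (−1)^{k−1} [σ]_{n/(k−1)} r^k ≤ |f(z)| ≤ r + 2(1−β) Σ_{k=2}^∞ [σ]_{n/(k−1)} r^k, where [σ]_{n/j} = (σ-(n-1))_n/(σ+j-(n-1))_n. -/

import Mathlib

/-!
Schwarz's lemma applied to `(p - 1) / (p + 1)` writes a Carathéodory function as
`p z = (1 + u) / (1 - u)` with `‖u‖ ≤ ‖z‖ = r`, whence `Φ(-r) ≤ Re p z` and `‖p z‖ ≤ Φ(r)` for the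
extremal function `Φ(x) = (1 + x) / (1 - x) = 1 + 2 ∑ xʲ`. The averaging step
`q ↦ (σ - k) ∫₀¹ s^(σ-k-1) q(s z) ds` has a positive kernel, so it carries both bounds over to the
averaged functions with `Φ` replaced by its own average; on power series it multiplies the
coefficient of `xʲ` by `(σ - k) / (σ - k + j)`. After `n` steps the coefficients of the averaged
`Φ` are `2 [σ]_{n/j}`, and `‖f z‖ = r ‖β + (1 - β) p_{σ,n}(z)‖` lies between
`r (β + (1 - β) Φₙ(∓r))`.
-/

open Complex MeasureTheory

/-- The Carathéodory class `P`: analytic on the unit disk, value `1` at `0`,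
positive real part. -/
def IsCara (p : ℂ → ℂ) : Prop :=
  DifferentiableOn ℂ p (Metric.ball 0 1) ∧ p 0 = 1 ∧
    ∀ z ∈ Metric.ball (0 : ℂ) 1, 0 < (p z).re

/-- The σ-nth integral iterate (averaged form after substituting `t = s z`):
`p_{σ,n}(z) = (σ-(n-1)) ∫_0^1 s^(σ-n) p_{σ,n-1}(s z) ds`. -/
noncomputable def sigmaIter (σ : ℝ) : ℕ → (ℂ → ℂ) → (ℂ → ℂ)
  | 0, p => p
  | (n + 1), p => fun z =>
      ((σ - (n : ℝ)) : ℂ) *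
        ∫ s in (0 : ℝ)..1, ((s ^ (σ - ((n : ℝ) + 1)) : ℝ) : ℂ) * sigmaIter σ n p ((s : ℂ) * z)

/-- The coefficient multiplier `[σ]_{n/k} = (σ-(n-1))_n / (σ+k-(n-1))_n`
(Pochhammer / rising factorial). -/
noncomputable def poch (σ : ℝ) (n k : ℕ) : ℝ :=
  (ascPochhammer ℝ n).eval (σ - ((n : ℝ) - 1)) /
    (ascPochhammer ℝ n).eval (σ + (k : ℝ) - ((n : ℝ) - 1))

/-- Membership in `P_n^σ`. -/
def MemPn (σ : ℝ) (n : ℕ) (q : ℂ → ℂ) : Prop :=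
  ∃ p : ℂ → ℂ, IsCara p ∧ ∀ z ∈ Metric.ball (0 : ℂ) 1, q z = sigmaIter σ n p z

/-- Membership in `B_n^σ(β)`: `f(z) = z (β + (1-β) p_{σ,n}(z))` for some Carathéodory `p`. -/
def MemB (σ : ℝ) (n : ℕ) (β : ℝ) (f : ℂ → ℂ) : Prop :=
  ∃ p : ℂ → ℂ, IsCara p ∧ ∀ z ∈ Metric.ball (0 : ℂ) 1,
    f z = z * ((β : ℂ) + ((1 : ℂ) - β) * sigmaIter σ n p z)

theorem poch_zero_left (σ : ℝ) (j : ℕ) : poch σ 0 j = 1 := by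
  simp [poch]

theorem poch_succ (σ : ℝ) (k j : ℕ) :
    poch σ (k + 1) j = poch σ k j * ((σ - k) / (σ - k + j)) := by
  simp only [poch, ascPochhammer_succ_left, Polynomial.eval_mul, Polynomial.eval_X,
    Polynomial.eval_comp, Polynomial.eval_add, Polynomial.eval_one]
  push_cast
  rw [mul_div_mul_comm, mul_comm]
  congr 3 <;> ring

theorem poch_zero_right {σ : ℝ} {k : ℕ} (hσ : (k : ℝ) - 1 < σ) : poch σ k 0 = 1 := by
  rw [poch, Nat.cast_zero, add_zero]
  exact div_self (ascPochhammer_pos k _ (by linarith)).ne'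

theorem poch_pos {σ : ℝ} {k : ℕ} (hσ : (k : ℝ) - 1 < σ) (j : ℕ) : 0 < poch σ k j := by
  induction k with
  | zero => simp [poch_zero_left]
  | succ k ih =>
    push_cast at hσ
    have hj : (0 : ℝ) ≤ j := j.cast_nonneg
    rw [poch_succ]
    exact mul_pos (ih (by linarith)) (div_pos (by linarith) (by linarith))

theorem poch_le_one {σ : ℝ} {k : ℕ} (hσ : (k : ℝ) - 1 < σ) (j : ℕ) : poch σ k j ≤ 1 := by
  induction k with
  | zero => simp [poch_zero_left]
  | succ k ih =>
    push_cast at hσ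
    have hj : (0 : ℝ) ≤ j := j.cast_nonneg
    rw [poch_succ]
    refine mul_le_one₀ (ih (by linarith)) (div_pos (by linarith) (by linarith)).le ?_
    exact div_le_one_of_le₀ (by linarith) (by linarith)

section PowerSeries

variable {c : ℕ → ℝ} {C x : ℝ}

theorem norm_mul_pow_le (hc : ∀ j, |c j| ≤ C) {y : ℝ} (hy : |y| ≤ |x|) (j : ℕ) :
    ‖c j * y ^ j‖ ≤ C * |x| ^ j := by
  rw [Real.norm_eq_abs, abs_mul, abs_pow]
  exact mul_le_mul (hc j) (pow_le_pow_left₀ (abs_nonneg y) hy j) (by positivity)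
    ((abs_nonneg _).trans (hc j))

theorem summable_const_mul_geometric (hx : |x| < 1) : Summable fun j : ℕ => C * |x| ^ j :=
  (summable_geometric_of_lt_one (abs_nonneg x) hx).mul_left C

theorem summable_mul_pow_of_abs_le (hc : ∀ j, |c j| ≤ C) (hx : |x| < 1) :
    Summable fun j => c j * x ^ j :=
  (summable_const_mul_geometric hx).of_norm_bounded (norm_mul_pow_le hc le_rfl)

theorem abs_mul_le_of_mem_Icc {s : ℝ} (hs : s ∈ Set.Icc (0 : ℝ) 1) : |s * x| ≤ |x| := by
  rw [abs_mul, abs_of_nonneg hs.1]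
  exact mul_le_of_le_one_left (abs_nonneg x) hs.2

theorem continuousOn_tsum_mul_pow_mul (hc : ∀ j, |c j| ≤ C) (hx : |x| < 1) :
    ContinuousOn (fun s => ∑' j, c j * (s * x) ^ j) (Set.Icc 0 1) :=
  continuousOn_tsum (fun j => by fun_prop) (summable_const_mul_geometric hx)
    fun j _ hs => norm_mul_pow_le hc (abs_mul_le_of_mem_Icc hs) j

theorem intervalIntegrable_rpow_mul_tsum (hc : ∀ j, |c j| ≤ C) {a : ℝ} (ha : -1 < a)
    (hx : |x| < 1) :
    IntervalIntegrable (fun s => s ^ a * ∑' j, c j * (s * x) ^ j) volume 0 1 :=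
  (intervalIntegral.intervalIntegrable_rpow' ha).mul_continuousOn
    (by rw [Set.uIcc_of_le zero_le_one]; exact continuousOn_tsum_mul_pow_mul hc hx)

theorem integral_rpow_mul_pow {a : ℝ} (ha : -1 < a) (j : ℕ) :
    ∫ s in (0 : ℝ)..1, s ^ a * (c j * (s * x) ^ j) = c j * x ^ j / (a + j + 1) := by
  have hpow : ∀ s ∈ Set.uIoc (0 : ℝ) 1,
      s ^ a * (c j * (s * x) ^ j) = c j * x ^ j * s ^ (a + j) := by
    intro s hs
    rw [Set.uIoc_of_le zero_le_one] at hs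
    rw [Real.rpow_add_natCast hs.1.ne', mul_pow]
    ring
  have hj : -1 < a + j := by linarith [(j.cast_nonneg : (0 : ℝ) ≤ j)]
  rw [intervalIntegral.integral_congr_ae (ae_of_all _ hpow), intervalIntegral.integral_const_mul,
    integral_rpow (Or.inl hj), Real.one_rpow, Real.zero_rpow (by linarith)]
  ring

theorem hasSum_integral_rpow_mul_tsum (hc : ∀ j, |c j| ≤ C) {a : ℝ} (ha : -1 < a)
    (hx : |x| < 1) :
    HasSum (fun j => c j * x ^ j / (a + j + 1))
      (∫ s in (0 : ℝ)..1, s ^ a * ∑' j, c j * (s * x) ^ j) := by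
  have hbound : ∀ j, ∀ s ∈ Set.uIoc (0 : ℝ) 1,
      ‖s ^ a * (c j * (s * x) ^ j)‖ ≤ s ^ a * (C * |x| ^ j) := by
    intro j s hs
    rw [Set.uIoc_of_le zero_le_one] at hs
    rw [norm_mul, Real.norm_of_nonneg (Real.rpow_nonneg hs.1.le a)]
    exact mul_le_mul_of_nonneg_left
      (norm_mul_pow_le hc (abs_mul_le_of_mem_Icc (Set.Ioc_subset_Icc_self hs)) j)
      (Real.rpow_nonneg hs.1.le a)
  have hsum_bound : ∀ s : ℝ, ∑' j, s ^ a * (C * |x| ^ j) = s ^ a * (C * (1 - |x|)⁻¹) := by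
    intro s
    rw [tsum_mul_left, tsum_mul_left, tsum_geometric_of_lt_one (abs_nonneg x) hx]
  simp_rw [← integral_rpow_mul_pow (c := c) (x := x) ha]
  refine intervalIntegral.hasSum_integral_of_dominated_convergence
    (fun j s => s ^ a * (C * |x| ^ j)) (fun j => (by fun_prop : Measurable _).aestronglyMeasurable)
    (fun j => ae_of_all _ (hbound j))
    (ae_of_all _ fun s _ => (summable_const_mul_geometric hx).mul_left _) ?_
    (ae_of_all _ fun s hs => ?_)
  · simp_rw [hsum_bound]
    exact (intervalIntegral.intervalIntegrable_rpow' ha).mul_const _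
  · rw [Set.uIoc_of_le zero_le_one] at hs
    have hsx := (abs_mul_le_of_mem_Icc (Set.Ioc_subset_Icc_self hs)).trans_lt hx
    exact (summable_mul_pow_of_abs_le hc hsx).hasSum.mul_left _

end PowerSeries

noncomputable def extremalCoeff (σ : ℝ) (k j : ℕ) : ℝ :=
  (if j = 0 then 1 else 2) * poch σ k j

/-- The `k`-th iterate of the extremal Carathéodory function `(1 + x) / (1 - x)`, expanded in
powers of `x`. -/
noncomputable def extremal (σ : ℝ) (k : ℕ) (x : ℝ) : ℝ :=
  ∑' j, extremalCoeff σ k j * x ^ j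

section Extremal

variable {σ : ℝ} {k : ℕ} {x : ℝ}

theorem abs_extremalCoeff_le (hσ : (k : ℝ) - 1 < σ) (j : ℕ) : |extremalCoeff σ k j| ≤ 2 := by
  have hw : (if j = 0 then 1 else 2 : ℝ) ∈ Set.Icc 0 2 := by split_ifs <;> norm_num
  rw [extremalCoeff, abs_of_nonneg (mul_nonneg hw.1 (poch_pos hσ j).le)]
  simpa using mul_le_mul hw.2 (poch_le_one hσ j) (poch_pos hσ j).le zero_le_two

theorem extremal_zero (hx : |x| < 1) : extremal σ 0 x = (1 + x) / (1 - x) := by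
  have hsum : Summable fun j => extremalCoeff σ 0 j * x ^ j :=
    summable_mul_pow_of_abs_le (C := 2)
      (fun j => by rw [extremalCoeff, poch_zero_left]; split_ifs <;> norm_num) hx
  have hx1 : 1 - x ≠ 0 := by linarith [(abs_lt.1 hx).2]
  rw [extremal, hsum.tsum_eq_zero_add]
  simp only [extremalCoeff, poch_zero_left, if_true, Nat.add_one_ne_zero, if_false, pow_succ]
  rw [tsum_mul_left, tsum_mul_right, tsum_geometric_of_abs_lt_one hx]
  field_simp
  ring

theorem extremal_succ (hσ : (k : ℝ) < σ) (hx : |x| < 1) :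
    (σ - k) * ∫ s in (0 : ℝ)..1, s ^ (σ - (k + 1)) * extremal σ k (s * x) =
      extremal σ (k + 1) x := by
  have h := hasSum_integral_rpow_mul_tsum (abs_extremalCoeff_le (σ := σ) (k := k) (by linarith))
    (a := σ - (k + 1)) (by linarith) hx
  simp only [extremal]
  rw [← (h.mul_left (σ - k)).tsum_eq]
  refine tsum_congr fun j => ?_
  have hj : σ - k + j ≠ 0 := by linarith [(j.cast_nonneg : (0 : ℝ) ≤ j)]
  rw [show σ - (k + 1) + j + 1 = σ - k + j by ring, extremalCoeff, extremalCoeff, poch_succ]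
  field_simp

theorem extremal_eq_one_add (hσ : (k : ℝ) - 1 < σ) (hx : |x| < 1) :
    extremal σ k x = 1 + 2 * ∑' j : ℕ, poch σ k (j + 1) * x ^ (j + 1) := by
  rw [extremal, (summable_mul_pow_of_abs_le (abs_extremalCoeff_le hσ) hx).tsum_eq_zero_add,
    ← tsum_mul_left]
  simp only [extremalCoeff, if_true, Nat.add_one_ne_zero, if_false, poch_zero_right hσ,
    pow_zero, mul_one, mul_assoc]

theorem intervalIntegrable_rpow_mul_extremal (hσ : (k : ℝ) - 1 < σ) {a : ℝ} (ha : -1 < a)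
    (hx : |x| < 1) :
    IntervalIntegrable (fun s => s ^ a * extremal σ k (s * x)) volume 0 1 :=
  intervalIntegrable_rpow_mul_tsum (abs_extremalCoeff_le hσ) ha hx

end Extremal

section Caratheodory

theorem one_sub_div_one_add_le_of_le {s t : ℝ} (hs : 0 ≤ s) (hst : s ≤ t) :
    (1 - t) / (1 + t) ≤ (1 - s) / (1 + s) := by
  rw [div_le_div_iff₀ (by linarith) (by linarith)]
  nlinarith

theorem one_add_div_one_sub_le_of_le {s t : ℝ} (hst : s ≤ t) (ht : t < 1) :
    (1 + s) / (1 - s) ≤ (1 + t) / (1 - t) := by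
  rw [div_le_div_iff₀ (by linarith) (by linarith)]
  nlinarith

theorem re_one_add_div_one_sub {u : ℂ} :
    ((1 + u) / (1 - u)).re = (1 - ‖u‖ ^ 2) / ‖1 - u‖ ^ 2 := by
  rw [Complex.div_re, ← Complex.normSq_eq_norm_sq, ← Complex.normSq_eq_norm_sq]
  simp only [Complex.add_re, Complex.add_im, Complex.sub_re, Complex.sub_im,
    Complex.one_re, Complex.one_im, Complex.normSq_apply]
  ring

theorem le_re_one_add_div_one_sub {u : ℂ} {r : ℝ} (hu : ‖u‖ ≤ r) (hr : r < 1) :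
    (1 - r) / (1 + r) ≤ ((1 + u) / (1 - u)).re := by
  have hu1 : ‖u‖ < 1 := hu.trans_lt hr
  have hsub : 0 < ‖1 - u‖ := norm_pos_iff.2 (sub_ne_zero.2 (fun h => by simp [← h] at hu1))
  have hsub' : ‖1 - u‖ ≤ 1 + ‖u‖ := (norm_sub_le _ _).trans_eq (by simp)
  calc (1 - r) / (1 + r) ≤ (1 - ‖u‖) / (1 + ‖u‖) :=
        one_sub_div_one_add_le_of_le (norm_nonneg u) hu
    _ = (1 - ‖u‖ ^ 2) / (1 + ‖u‖) ^ 2 := by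
        field_simp
        ring
    _ ≤ (1 - ‖u‖ ^ 2) / ‖1 - u‖ ^ 2 :=
        div_le_div_of_nonneg_left (by nlinarith [norm_nonneg u]) (by positivity)
          (pow_le_pow_left₀ hsub.le hsub' 2)
    _ = ((1 + u) / (1 - u)).re := re_one_add_div_one_sub.symm

theorem norm_one_add_div_one_sub_le {u : ℂ} {r : ℝ} (hu : ‖u‖ ≤ r) (hr : r < 1) :
    ‖(1 + u) / (1 - u)‖ ≤ (1 + r) / (1 - r) := by
  have hu1 : ‖u‖ < 1 := hu.trans_lt hr
  have hsub : 1 - ‖u‖ ≤ ‖1 - u‖ := by simpa using norm_sub_norm_le (1 : ℂ) u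
  rw [norm_div]
  calc ‖1 + u‖ / ‖1 - u‖ ≤ (1 + ‖u‖) / (1 - ‖u‖) :=
        div_le_div₀ (by positivity) ((norm_add_le _ _).trans_eq (by simp)) (by linarith) hsub
    _ ≤ (1 + r) / (1 - r) := one_add_div_one_sub_le_of_le hu hr

theorem norm_sub_one_lt_norm_add_one {w : ℂ} (hw : 0 < w.re) : ‖w - 1‖ < ‖w + 1‖ := by
  rw [← sq_lt_sq₀ (norm_nonneg _) (norm_nonneg _), ← Complex.normSq_eq_norm_sq,
    ← Complex.normSq_eq_norm_sq]
  simp only [Complex.normSq_apply, Complex.sub_re, Complex.sub_im, Complex.add_re,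
    Complex.add_im, Complex.one_re, Complex.one_im]
  nlinarith

theorem IsCara.exists_eq_one_add_div_one_sub {p : ℂ → ℂ} (hp : IsCara p) {z : ℂ}
    (hz : z ∈ Metric.ball (0 : ℂ) 1) : ∃ u : ℂ, ‖u‖ ≤ ‖z‖ ∧ p z = (1 + u) / (1 - u) := by
  obtain ⟨hd, h0, hre⟩ := hp
  have hne : ∀ w ∈ Metric.ball (0 : ℂ) 1, p w + 1 ≠ 0 := fun w hw h => by
    have h' := congrArg Complex.re h
    simp only [Complex.add_re, Complex.one_re, Complex.zero_re] at h'
    linarith [hre w hw]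
  set v : ℂ → ℂ := fun w => (p w - 1) / (p w + 1)
  have hv : Set.MapsTo v (Metric.ball 0 1) (Metric.closedBall 0 1) := fun w hw => by
    rw [mem_closedBall_zero_iff, norm_div]
    exact div_le_one_of_le₀ (norm_sub_one_lt_norm_add_one (hre w hw)).le (norm_nonneg _)
  have hvz : ‖v z‖ ≤ ‖z‖ := Complex.norm_le_norm_of_mapsTo_ball
    ((hd.sub_const 1).div (hd.add_const 1) hne) hv (by simp [v, h0]) (mem_ball_zero_iff.1 hz)
  refine ⟨v z, hvz, ?_⟩
  have hvz1 : 1 - v z ≠ 0 := fun h => by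
    linarith [mem_ball_zero_iff.1 hz, (sub_eq_zero.1 h ▸ hvz : ‖(1 : ℂ)‖ ≤ ‖z‖), norm_one (α := ℂ)]
  rw [eq_div_iff hvz1]
  simp only [v]
  field_simp [hne z hz]
  ring

theorem IsCara.le_re_and_norm_le {p : ℂ → ℂ} (hp : IsCara p) {z : ℂ}
    (hz : z ∈ Metric.ball (0 : ℂ) 1) :
    (1 - ‖z‖) / (1 + ‖z‖) ≤ (p z).re ∧ ‖p z‖ ≤ (1 + ‖z‖) / (1 - ‖z‖) := by
  obtain ⟨u, hu, hpu⟩ := hp.exists_eq_one_add_div_one_sub hz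
  rw [hpu]
  exact ⟨le_re_one_add_div_one_sub hu (mem_ball_zero_iff.1 hz),
    norm_one_add_div_one_sub_le hu (mem_ball_zero_iff.1 hz)⟩

end Caratheodory

section RadialAverage

variable {a : ℝ} {g : ℂ → ℂ}

theorem ofReal_mul_mem_ball {s : ℝ} (hs : s ∈ Set.Icc (0 : ℝ) 1) {z : ℂ}
    (hz : z ∈ Metric.ball (0 : ℂ) 1) : (s : ℂ) * z ∈ Metric.ball (0 : ℂ) 1 := by
  rw [mem_ball_zero_iff] at hz ⊢
  rw [norm_mul, Complex.norm_real, Real.norm_of_nonneg hs.1]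
  exact (mul_le_of_le_one_left (norm_nonneg z) hs.2).trans_lt hz

theorem abs_norm_lt_one_of_mem_ball {z : ℂ} (hz : z ∈ Metric.ball (0 : ℂ) 1) : |‖z‖| < 1 := by
  rw [abs_norm]
  exact mem_ball_zero_iff.1 hz

theorem intervalIntegrable_rpow_mul_comp (ha : -1 < a) (hg : ContinuousOn g (Metric.ball 0 1))
    {z : ℂ} (hz : z ∈ Metric.ball (0 : ℂ) 1) :
    IntervalIntegrable (fun s : ℝ => ((s ^ a : ℝ) : ℂ) * g ((s : ℂ) * z)) volume 0 1 := by
  refine IntervalIntegrable.mul_continuousOn ?_ ?_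
  · have h := intervalIntegral.intervalIntegrable_rpow' (a := 0) (b := 1) ha
    exact ⟨h.1.ofReal, h.2.ofReal⟩
  · rw [Set.uIcc_of_le zero_le_one]
    exact hg.comp (by fun_prop) fun s hs => ofReal_mul_mem_ball hs hz

theorem continuousOn_integral_rpow_mul_comp (ha : -1 < a)
    (hg : ContinuousOn g (Metric.ball 0 1)) :
    ContinuousOn (fun z => ∫ s in (0 : ℝ)..1, ((s ^ a : ℝ) : ℂ) * g ((s : ℂ) * z))
      (Metric.ball 0 1) := by
  intro z₀ hz₀
  obtain ⟨ρ, hz₀ρ, hρ⟩ := exists_between (mem_ball_zero_iff.1 hz₀)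
  obtain ⟨C, hC⟩ := (isCompact_closedBall (0 : ℂ) ρ).exists_bound_of_continuousOn
    (hg.mono (Metric.closedBall_subset_ball hρ))
  have hnhds : Metric.ball (0 : ℂ) ρ ∈ nhdsWithin z₀ (Metric.ball 0 1) :=
    mem_nhdsWithin_of_mem_nhds (Metric.isOpen_ball.mem_nhds (mem_ball_zero_iff.2 hz₀ρ))
  refine intervalIntegral.continuousWithinAt_of_dominated_interval (bound := fun s => s ^ a * C)
    ?_ ?_ ((intervalIntegral.intervalIntegrable_rpow' ha).mul_const C) ?_
  · filter_upwards [self_mem_nhdsWithin] with z hz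
    exact (intervalIntegrable_rpow_mul_comp ha hg hz).def'.aestronglyMeasurable
  · filter_upwards [hnhds] with z hz
    refine ae_of_all _ fun s hs => ?_
    rw [Set.uIoc_of_le zero_le_one] at hs
    rw [norm_mul, Complex.norm_real, Real.norm_of_nonneg (Real.rpow_nonneg hs.1.le a)]
    refine mul_le_mul_of_nonneg_left (hC _ ?_) (Real.rpow_nonneg hs.1.le a)
    rw [mem_closedBall_zero_iff, norm_mul, Complex.norm_real, Real.norm_of_nonneg hs.1.le]
    exact (mul_le_of_le_one_left (norm_nonneg z) hs.2).trans (mem_ball_zero_iff.1 hz).le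
  · refine ae_of_all _ fun s hs => ?_
    rw [Set.uIoc_of_le zero_le_one] at hs
    have hmem := ofReal_mul_mem_ball (Set.Ioc_subset_Icc_self hs) hz₀
    exact continuousWithinAt_const.mul ((hg _ hmem).comp (by fun_prop)
      fun z hz => ofReal_mul_mem_ball (Set.Ioc_subset_Icc_self hs) hz)

theorem integral_rpow_mul_comp_bounds (ha : -1 < a) (hg : ContinuousOn g (Metric.ball 0 1))
    {Φ : ℝ → ℝ} (hΦ : ∀ x, |x| < 1 → IntervalIntegrable (fun s => s ^ a * Φ (s * x)) volume 0 1)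
    (hbound : ∀ w ∈ Metric.ball (0 : ℂ) 1, Φ (-‖w‖) ≤ (g w).re ∧ ‖g w‖ ≤ Φ ‖w‖)
    {z : ℂ} (hz : z ∈ Metric.ball (0 : ℂ) 1) :
    ∫ s in (0 : ℝ)..1, s ^ a * Φ (s * -‖z‖) ≤
        (∫ s in (0 : ℝ)..1, ((s ^ a : ℝ) : ℂ) * g ((s : ℂ) * z)).re ∧
      ‖∫ s in (0 : ℝ)..1, ((s ^ a : ℝ) : ℂ) * g ((s : ℂ) * z)‖ ≤
        ∫ s in (0 : ℝ)..1, s ^ a * Φ (s * ‖z‖) := by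
  have hz' := abs_norm_lt_one_of_mem_ball hz
  have hint := intervalIntegrable_rpow_mul_comp ha hg hz
  have hnorm : ∀ s ∈ Set.Icc (0 : ℝ) 1, ‖(s : ℂ) * z‖ = s * ‖z‖ := fun s hs => by
    rw [norm_mul, Complex.norm_real, Real.norm_of_nonneg hs.1]
  constructor
  · rw [← RCLike.re_to_complex, ← intervalIntegral.intervalIntegral_re hint]
    refine intervalIntegral.integral_mono_on zero_le_one (hΦ _ (by rwa [abs_neg]))
      ⟨hint.1.re, hint.2.re⟩ ?_
    intro s hs
    rw [RCLike.re_to_complex, Complex.re_ofReal_mul, mul_neg, ← hnorm s hs]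
    exact mul_le_mul_of_nonneg_left (hbound _ (ofReal_mul_mem_ball hs hz)).1
      (Real.rpow_nonneg hs.1 a)
  · refine intervalIntegral.norm_integral_le_of_norm_le zero_le_one
      (ae_of_all _ fun s hs => ?_) (hΦ _ hz')
    have hs' := Set.Ioc_subset_Icc_self hs
    rw [norm_mul, Complex.norm_real, Real.norm_of_nonneg (Real.rpow_nonneg hs'.1 a),
      ← hnorm s hs']
    exact mul_le_mul_of_nonneg_left (hbound _ (ofReal_mul_mem_ball hs' hz)).2
      (Real.rpow_nonneg hs'.1 a)

end RadialAverage

section SigmaIter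

variable {σ : ℝ} {p : ℂ → ℂ}

theorem sigmaIter_succ (k : ℕ) (z : ℂ) :
    sigmaIter σ (k + 1) p z = ((σ - k : ℝ) : ℂ) *
      ∫ s in (0 : ℝ)..1, ((s ^ (σ - (k + 1)) : ℝ) : ℂ) * sigmaIter σ k p ((s : ℂ) * z) := by
  rw [sigmaIter, Complex.ofReal_sub, Complex.ofReal_natCast]

theorem IsCara.continuousOn_sigmaIter (hp : IsCara p) {k : ℕ} (hσ : (k : ℝ) - 1 < σ) :
    ContinuousOn (sigmaIter σ k p) (Metric.ball 0 1) := by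
  induction k with
  | zero => exact hp.1.continuousOn
  | succ k ih =>
    push_cast at hσ
    rw [show sigmaIter σ (k + 1) p = _ from funext (sigmaIter_succ k)]
    exact continuousOn_const.mul
      (continuousOn_integral_rpow_mul_comp (by linarith) (ih (by linarith)))

theorem IsCara.extremal_le_re_and_norm_le (hp : IsCara p) {k : ℕ} (hσ : (k : ℝ) - 1 < σ)
    {z : ℂ} (hz : z ∈ Metric.ball (0 : ℂ) 1) :
    extremal σ k (-‖z‖) ≤ (sigmaIter σ k p z).re ∧ ‖sigmaIter σ k p z‖ ≤ extremal σ k ‖z‖ := by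
  have hz' := abs_norm_lt_one_of_mem_ball hz
  induction k generalizing z with
  | zero =>
    rw [extremal_zero (by rwa [abs_neg]), extremal_zero hz', sub_neg_eq_add, ← sub_eq_add_neg]
    exact hp.le_re_and_norm_le hz
  | succ k ih =>
    push_cast at hσ
    have hσk : 0 ≤ σ - k := by linarith
    obtain ⟨hre, hnorm⟩ := integral_rpow_mul_comp_bounds (a := σ - (k + 1)) (by linarith)
      (hp.continuousOn_sigmaIter (by linarith))
      (fun x hx => intervalIntegrable_rpow_mul_extremal (by linarith) (by linarith) hx)
      (fun w hw => ih (by linarith) hw (abs_norm_lt_one_of_mem_ball hw)) hz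
    rw [sigmaIter_succ, ← extremal_succ (by linarith) (by rwa [abs_neg]),
      ← extremal_succ (by linarith) hz', Complex.re_ofReal_mul, norm_mul, Complex.norm_real,
      Real.norm_of_nonneg hσk]
    exact ⟨mul_le_mul_of_nonneg_left hre hσk, mul_le_mul_of_nonneg_left hnorm hσk⟩

end SigmaIter

theorem norm_add_one_sub_mul_mem_Icc {β : ℝ} (hβ0 : 0 ≤ β) (hβ1 : β ≤ 1) {q : ℂ} {lo hi : ℝ}
    (hlo : lo ≤ q.re) (hhi : ‖q‖ ≤ hi) :
    ‖(β : ℂ) + (1 - β) * q‖ ∈ Set.Icc (β + (1 - β) * lo) (β + (1 - β) * hi) := by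
  have hcast : (1 : ℂ) - β = ((1 - β : ℝ) : ℂ) := by push_cast; ring
  rw [hcast]
  constructor
  · calc β + (1 - β) * lo ≤ β + (1 - β) * q.re := by gcongr
      _ = ((β : ℂ) + ((1 - β : ℝ) : ℂ) * q).re := by simp
      _ ≤ _ := Complex.re_le_norm _
  · calc ‖(β : ℂ) + ((1 - β : ℝ) : ℂ) * q‖ ≤ β + (1 - β) * ‖q‖ := by
          refine (norm_add_le _ _).trans_eq ?_
          rw [norm_mul, Complex.norm_real, Complex.norm_real, Real.norm_of_nonneg hβ0,
            Real.norm_of_nonneg (by linarith)]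
      _ ≤ β + (1 - β) * hi := by gcongr

theorem mul_extremal_eq {σ : ℝ} {n : ℕ} (hσ : (n : ℝ) - 1 < σ) (β : ℝ) {ε r : ℝ}
    (hεr : |ε * r| < 1) :
    r * (β + (1 - β) * extremal σ n (ε * r)) =
      r + 2 * (1 - β) * ∑' k : ℕ, ε ^ (k + 1) * poch σ n (k + 1) * r ^ (k + 2) := by
  have hsum : r * ∑' k : ℕ, poch σ n (k + 1) * (ε * r) ^ (k + 1) =
      ∑' k : ℕ, ε ^ (k + 1) * poch σ n (k + 1) * r ^ (k + 2) := by
    rw [← tsum_mul_left]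
    exact tsum_congr fun k => by ring
  rw [extremal_eq_one_add hσ hεr, ← hsum]
  ring

/-- Sharp growth bounds in `B_n^σ(β)`:
`r + 2(1-β) Σ_{k≥2} (-1)^{k-1}[σ]_{n/(k-1)} r^k ≤ |f(z)| ≤
 r + 2(1-β) Σ_{k≥2} [σ]_{n/(k-1)} r^k` for `|z| = r < 1`. -/
theorem stmt13 (σ : ℝ) (n : ℕ) (hσ : 0 < σ - ((n : ℝ) - 1))
    (β : ℝ) (hβ0 : 0 ≤ β) (hβ1 : β < 1)
    (f : ℂ → ℂ) (hf : MemB σ n β f)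
    (z : ℂ) (r : ℝ) (hz : ‖z‖ = r) (hr : r < 1) :
    r + 2 * (1 - β) * ∑' k : ℕ, (-1 : ℝ) ^ (k + 1) * poch σ n (k + 1) * r ^ (k + 2)
      ≤ ‖f z‖ ∧
    ‖f z‖ ≤ r + 2 * (1 - β) * ∑' k : ℕ, poch σ n (k + 1) * r ^ (k + 2) := by
  obtain ⟨p, hp, hfp⟩ := hf
  subst hz
  have hz : z ∈ Metric.ball (0 : ℂ) 1 := mem_ball_zero_iff.2 hr
  have hσ' : (n : ℝ) - 1 < σ := by linarith
  have hr' := abs_norm_lt_one_of_mem_ball hz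
  obtain ⟨hlo, hhi⟩ := hp.extremal_le_re_and_norm_le hσ' hz
  obtain ⟨hlo', hhi'⟩ := norm_add_one_sub_mul_mem_Icc hβ0 hβ1.le hlo hhi
  have hupper := mul_extremal_eq hσ' β (ε := 1) (r := ‖z‖) (by rwa [one_mul])
  simp only [one_pow, one_mul] at hupper
  rw [hfp z hz, norm_mul, ← hupper,
    ← mul_extremal_eq hσ' β (by rwa [neg_one_mul, abs_neg]), neg_one_mul]
  exact ⟨mul_le_mul_of_nonneg_left hlo' (norm_nonneg z),
    mul_le_mul_of_nonneg_left hhi' (norm_nonneg z)⟩
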